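/- Assume exactness, and let the SHB iterates be started from x0, x1 ∈ ℝ^d with x0 − x1 ∈ Range(Aᵀ), with stepsize 0 < ω ≤ 1/λmax and momentum parameter β satisfying (1 − sqrt(ω λmin⁺))² < β < 1. Let x* be the orthogonal projection of x0 onto {x : A x = b}. Then there exists a constant C > 0 such that for all k ≥ 0, ‖E[x_k − x*]‖² ≤ β^k C. -/

import Mathlib

open Matrix MeasureTheory ProbabilityTheory

/-- Matrices over measurable entries carry the product σ-algebra. -/
local instance {m n : ℕ} : MeasurableSpace (Matrix (Fin m) (Fin n) ℝ) :=
  MeasurableSpace.pi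

/-!
Since `H_k` is independent of `x_k`, which is a function of `H_1, …, H_{k-1}`, and `E[H_k] = W`,
the means `E[x_k]` follow the deterministic heavy-ball method for `f`: the error
`r_k = E[x_k] - x*` satisfies `r_{k+2} = M r_{k+1} - β r_k` with `M = (1 + β) I - ω AᵀWA`.
Independence also gives integrability, since products of independent integrable variables are
integrable. As `x*` is the projection of `x0`, `r_0 ⊥ ker A`, so `r_0`, `r_1` and then all `r_k`
lie in `Range Aᵀ`, where `0 ≤ M ≤ c := max (1 + β - ω λmin⁺) 0 < 2 √β`. For symmetric `M` the
energy `‖r_{k+1}‖² + β ‖r_k‖² - ⟨r_{k+1}, M r_k⟩` gets multiplied by exactly `β` at every step,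
and on `Range Aᵀ` it is at least `(1 - c / (2 √β)) ‖r_{k+1}‖²`.
-/

section LinearAlgebra

variable {ι κ : Type*}

lemma Matrix.IsSymm.transpose_mul_mul [Fintype κ] {W : Matrix κ κ ℝ} (hW : W.IsSymm)
    (B : Matrix κ ι ℝ) : (Bᵀ * W * B).IsSymm := by
  simp [IsSymm, transpose_mul, hW.eq, Matrix.mul_assoc]

variable [Fintype ι]

lemma dotProduct_self_nonneg (v : ι → ℝ) : 0 ≤ v ⬝ᵥ v := dotProduct_self_star_nonneg v

lemma Matrix.IsSymm.dotProduct_mulVec_comm {M : Matrix ι ι ℝ} (hM : M.IsSymm) (u v : ι → ℝ) :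
    u ⬝ᵥ (M *ᵥ v) = v ⬝ᵥ (M *ᵥ u) := by
  rw [dotProduct_mulVec, ← mulVec_transpose, hM.eq, dotProduct_comm]

lemma Matrix.mulVec_transpose_dotProduct [Fintype κ] (A : Matrix κ ι ℝ) (u : κ → ℝ)
    (z : ι → ℝ) :
    (Aᵀ *ᵥ u) ⬝ᵥ z = u ⬝ᵥ (A *ᵥ z) := by
  rw [mulVec_transpose, dotProduct_mulVec]

lemma Matrix.mem_range_transpose_of_forall_dotProduct_eq_zero [Fintype κ] (A : Matrix κ ι ℝ)
    {v : ι → ℝ} (hv : ∀ z, A *ᵥ z = 0 → v ⬝ᵥ z = 0) : v ∈ LinearMap.range Aᵀ.mulVecLin := by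
  set R := LinearMap.range Aᵀ.mulVecLin
  set K := LinearMap.ker A.mulVecLin
  have hdisj : Disjoint R K := by
    rw [Submodule.disjoint_def]
    rintro _ ⟨u, rfl⟩ hu
    rw [LinearMap.mem_ker, mulVecLin_apply, mulVecLin_apply] at hu
    rw [mulVecLin_apply, ← dotProduct_self_eq_zero, mulVec_transpose_dotProduct, hu,
      dotProduct_zero]
  have hdim : Module.finrank ℝ R + Module.finrank ℝ K = Module.finrank ℝ (ι → ℝ) := by
    rw [← LinearMap.finrank_range_add_finrank_ker A.mulVecLin]
    congr 1
    exact rank_transpose A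
  obtain ⟨p, ⟨u, rfl⟩, z, hz, hpz⟩ :=
    Submodule.mem_sup.mp ((Submodule.eq_top_of_disjoint R K hdim.ge hdisj).symm ▸
      Submodule.mem_top (x := v))
  rw [LinearMap.mem_ker, mulVecLin_apply] at hz
  have hzz : z ⬝ᵥ z = 0 := by
    have h := hv z hz
    rwa [← hpz, add_dotProduct, mulVecLin_apply, mulVec_transpose_dotProduct, hz,
      dotProduct_zero, zero_add] at h
  rw [← hpz, dotProduct_self_eq_zero.mp hzz, add_zero]
  exact ⟨u, rfl⟩

lemma Matrix.transpose_mul_mul_mulVec_mem_range [Fintype κ] (A : Matrix κ ι ℝ)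
    (W : Matrix κ κ ℝ) (v : ι → ℝ) : (Aᵀ * W * A) *ᵥ v ∈ LinearMap.range Aᵀ.mulVecLin :=
  ⟨W *ᵥ (A *ᵥ v), by rw [mulVecLin_apply, mulVec_mulVec, mulVec_mulVec, Matrix.mul_assoc]⟩

lemma dotProduct_eq_zero_of_forall_le_dotProduct_sub {v z : ι → ℝ}
    (h : ∀ t : ℝ, v ⬝ᵥ v ≤ (v - t • z) ⬝ᵥ (v - t • z)) : v ⬝ᵥ z = 0 := by
  set c := v ⬝ᵥ z
  set n := z ⬝ᵥ z
  have hn : 0 ≤ n := dotProduct_self_nonneg z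
  -- with `t (n + 1) = c` the hypothesis at `t` reads `t² (n + 2) ≤ 0`
  set t := c / (n + 1)
  have hc : c = t * (n + 1) := by rw [div_mul_cancel₀]; positivity
  have key := h t
  simp only [dotProduct_sub, sub_dotProduct, dotProduct_smul, smul_dotProduct, smul_eq_mul,
    dotProduct_comm z v] at key
  have ht : t = 0 := by nlinarith [sq_nonneg t]
  rw [hc, ht, zero_mul]

lemma Matrix.sub_mem_range_transpose_of_forall_le [Fintype κ] (A : Matrix κ ι ℝ) {b : κ → ℝ}
    {x₀ xstar : ι → ℝ} (hxstar : A *ᵥ xstar = b)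
    (hproj : ∀ y, A *ᵥ y = b → (x₀ - xstar) ⬝ᵥ (x₀ - xstar) ≤ (x₀ - y) ⬝ᵥ (x₀ - y)) :
    x₀ - xstar ∈ LinearMap.range Aᵀ.mulVecLin :=
  A.mem_range_transpose_of_forall_dotProduct_eq_zero fun z hz =>
    dotProduct_eq_zero_of_forall_le_dotProduct_sub fun t => by
      simpa [sub_add_eq_sub_sub] using
        hproj (xstar + t • z) (by simp [mulVec_add, mulVec_smul, hz, hxstar])

end LinearAlgebra

section HeavyBall

variable {ι : Type*} [Fintype ι]

lemma two_mul_dotProduct_mulVec_le {M : Matrix ι ι ℝ} (hM : M.IsSymm)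
    {R : Submodule ℝ (ι → ℝ)} {c : ℝ} (hc : 0 ≤ c)
    (hM0 : ∀ v ∈ R, 0 ≤ v ⬝ᵥ (M *ᵥ v)) (hMc : ∀ v ∈ R, v ⬝ᵥ (M *ᵥ v) ≤ c * (v ⬝ᵥ v))
    {u v : ι → ℝ} (hu : u ∈ R) (hv : v ∈ R) (s : ℝ) :
    2 * s * (u ⬝ᵥ (M *ᵥ v)) ≤ c * (u ⬝ᵥ u + s ^ 2 * (v ⬝ᵥ v)) := by
  have hplus := hMc (u + s • v) (R.add_mem hu (R.smul_mem s hv))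
  have hminus := hM0 (u - s • v) (R.sub_mem hu (R.smul_mem s hv))
  have hsq := dotProduct_self_nonneg (u - s • v)
  simp only [mulVec_add, mulVec_sub, mulVec_smul, dotProduct_add, add_dotProduct,
    dotProduct_sub, sub_dotProduct, dotProduct_smul, smul_dotProduct, smul_eq_mul,
    hM.dotProduct_mulVec_comm v u, dotProduct_comm v u] at hplus hminus hsq
  nlinarith

def heavyBallEnergy (M : Matrix ι ι ℝ) (β : ℝ) (u v : ι → ℝ) : ℝ :=
  u ⬝ᵥ u + β * (v ⬝ᵥ v) - u ⬝ᵥ (M *ᵥ v)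

lemma heavyBallEnergy_step {M : Matrix ι ι ℝ} (hM : M.IsSymm) (β : ℝ) (u v : ι → ℝ) :
    heavyBallEnergy M β (M *ᵥ u - β • v) u = β * heavyBallEnergy M β u v := by
  simp only [heavyBallEnergy, sub_dotProduct, dotProduct_sub, smul_dotProduct, dotProduct_smul,
    smul_eq_mul, dotProduct_comm (M *ᵥ u) v, hM.dotProduct_mulVec_comm v u]
  ring

lemma sub_mul_le_heavyBallEnergy {M : Matrix ι ι ℝ} (hM : M.IsSymm)
    {R : Submodule ℝ (ι → ℝ)} {β c : ℝ} (hβ : 0 ≤ β) (hc0 : 0 ≤ c) (hc : c ≤ 2 * √β)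
    (hM0 : ∀ v ∈ R, 0 ≤ v ⬝ᵥ (M *ᵥ v)) (hMc : ∀ v ∈ R, v ⬝ᵥ (M *ᵥ v) ≤ c * (v ⬝ᵥ v))
    {u v : ι → ℝ} (hu : u ∈ R) (hv : v ∈ R) :
    (2 * √β - c) * (u ⬝ᵥ u) ≤ 2 * √β * heavyBallEnergy M β u v := by
  have hcross := two_mul_dotProduct_mulVec_le hM hc0 hM0 hMc hu hv √β
  rw [Real.sq_sqrt hβ] at hcross
  have hv2 : 0 ≤ (2 * √β - c) * β * (v ⬝ᵥ v) :=
    mul_nonneg (mul_nonneg (by linarith) hβ) (dotProduct_self_nonneg v)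
  unfold heavyBallEnergy
  nlinarith

theorem exists_dotProduct_self_le_pow_mul_of_recurrence {M : Matrix ι ι ℝ} (hM : M.IsSymm)
    {R : Submodule ℝ (ι → ℝ)} {β c : ℝ} (hβ : 0 < β) (hc0 : 0 ≤ c) (hc : c < 2 * √β)
    (hM0 : ∀ v ∈ R, 0 ≤ v ⬝ᵥ (M *ᵥ v)) (hMc : ∀ v ∈ R, v ⬝ᵥ (M *ᵥ v) ≤ c * (v ⬝ᵥ v))
    {r : ℕ → ι → ℝ} (hr : ∀ k, r k ∈ R) (hrec : ∀ k, r (k + 2) = M *ᵥ r (k + 1) - β • r k) :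
    ∃ C, 0 < C ∧ ∀ k, r k ⬝ᵥ r k ≤ β ^ k * C := by
  set E₀ := heavyBallEnergy M β (r 1) (r 0)
  have henergy : ∀ k, heavyBallEnergy M β (r (k + 1)) (r k) = β ^ k * E₀ := by
    intro k
    induction k with
    | zero => simp [E₀]
    | succ k ih => rw [hrec, heavyBallEnergy_step hM, ih, pow_succ]; ring
  have hbound : ∀ k, (2 * √β - c) * (r (k + 1) ⬝ᵥ r (k + 1)) ≤ 2 * √β * (β ^ k * E₀) :=
    fun k => henergy k ▸ sub_mul_le_heavyBallEnergy hM hβ.le hc0 hc.le hM0 hMc (hr _) (hr _)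
  have hgap : 0 < 2 * √β - c := by linarith
  set K := 2 * √β * E₀ / ((2 * √β - c) * β) with hKdef
  have hsucc : ∀ k, r (k + 1) ⬝ᵥ r (k + 1) ≤ β ^ (k + 1) * K := fun k => calc
    r (k + 1) ⬝ᵥ r (k + 1) ≤ 2 * √β * (β ^ k * E₀) / (2 * √β - c) :=
      (le_div_iff₀' hgap).2 (hbound k)
    _ = β ^ (k + 1) * K := by rw [hKdef]; field_simp; ring
  have hK : 0 ≤ K := nonneg_of_mul_nonneg_right
    ((dotProduct_self_nonneg _).trans (by simpa using hsucc 0)) hβ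
  have hr0 : 0 ≤ r 0 ⬝ᵥ r 0 := dotProduct_self_nonneg _
  refine ⟨r 0 ⬝ᵥ r 0 + K + 1, by positivity, ?_⟩
  rintro (_ | k)
  · simp only [pow_zero, one_mul]; linarith
  · exact (hsucc k).trans (mul_le_mul_of_nonneg_left (by linarith) (by positivity))

lemma one_add_sub_lt_two_mul_sqrt {a β : ℝ} (hlow : (1 - √a) ^ 2 < β) (hhigh : β < 1) :
    1 + β - a < 2 * √β := by
  have hβ : 0 ≤ β := (sq_nonneg _).trans hlow.le
  have hsβ : √β < 1 := by simpa using Real.sqrt_lt_sqrt hβ hhigh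
  have habs : |1 - √a| < √β := by
    rw [← Real.sqrt_sq_eq_abs]; exact Real.sqrt_lt_sqrt (sq_nonneg _) hlow
  have hsa : 1 - √β < √a := by linarith [(abs_lt.mp habs).2]
  have ha : 0 < a := Real.sqrt_pos.mp (by linarith)
  nlinarith [Real.sq_sqrt ha.le, Real.sq_sqrt hβ]

theorem heavyBall_exists_dotProduct_self_le_pow_mul {T : Matrix ι ι ℝ} (hT : T.IsSymm)
    {R : Submodule ℝ (ι → ℝ)} (hTR : ∀ v ∈ R, T *ᵥ v ∈ R) {lmin lmax ω β : ℝ}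
    (hlmin : ∀ v ∈ R, lmin * (v ⬝ᵥ v) ≤ v ⬝ᵥ (T *ᵥ v))
    (hlmax : ∀ v ∈ R, v ⬝ᵥ (T *ᵥ v) ≤ lmax * (v ⬝ᵥ v))
    (hω0 : 0 ≤ ω) (hω : ω * lmax ≤ 1) (hβlow : (1 - √(ω * lmin)) ^ 2 < β) (hβhigh : β < 1)
    {r : ℕ → ι → ℝ} (hr0 : r 0 ∈ R) (hr1 : r 1 ∈ R)
    (hrec : ∀ k, r (k + 2) = r (k + 1) - ω • (T *ᵥ r (k + 1)) + β • (r (k + 1) - r k)) :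
    ∃ C, 0 < C ∧ ∀ k, r k ⬝ᵥ r k ≤ β ^ k * C := by
  classical
  have hβ : 0 < β := lt_of_le_of_lt (sq_nonneg _) hβlow
  set M : Matrix ι ι ℝ := (1 + β) • 1 - ω • T
  have hMv : ∀ v, M *ᵥ v = (1 + β) • v - ω • (T *ᵥ v) := fun v => by
    simp [M, sub_mulVec, smul_mulVec]
  have hquad : ∀ v, v ⬝ᵥ (M *ᵥ v) = (1 + β) * (v ⬝ᵥ v) - ω * (v ⬝ᵥ (T *ᵥ v)) := fun v => by
    simp [hMv, dotProduct_sub, dotProduct_smul]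
  have hr : ∀ k, r k ∈ R := Nat.twoStepInduction hr0 hr1 fun k h₀ h₁ => by
    rw [hrec]
    exact R.add_mem (R.sub_mem h₁ (R.smul_mem _ (hTR _ h₁))) (R.smul_mem _ (R.sub_mem h₁ h₀))
  have hM0 : ∀ v ∈ R, 0 ≤ v ⬝ᵥ (M *ᵥ v) := fun v hv => by
    rw [hquad]
    nlinarith [mul_le_mul_of_nonneg_left (hlmax v hv) hω0, dotProduct_self_nonneg v]
  have hMc : ∀ v ∈ R, v ⬝ᵥ (M *ᵥ v) ≤ max (1 + β - ω * lmin) 0 * (v ⬝ᵥ v) := fun v hv => by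
    rw [hquad]
    nlinarith [mul_le_mul_of_nonneg_left (hlmin v hv) hω0,
      mul_le_mul_of_nonneg_right (le_max_left (1 + β - ω * lmin) 0) (dotProduct_self_nonneg v)]
  refine exists_dotProduct_self_le_pow_mul_of_recurrence ((isSymm_one.smul _).sub (hT.smul _)) hβ
    (le_max_right _ _) (max_lt (one_add_sub_lt_two_mul_sqrt hβlow hβhigh) (by positivity))
    hM0 hMc hr fun k => ?_
  rw [hrec, hMv]
  module

end HeavyBall

section Random

variable {Ω : Type*} {mΩ : MeasurableSpace Ω} {μ : Measure Ω} {m n : ℕ}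

lemma measurable_matrix_entry (i : Fin m) (j : Fin n) :
    Measurable fun M : Matrix (Fin m) (Fin n) ℝ => M i j :=
  (measurable_pi_apply j).comp (measurable_pi_apply i)

lemma measurable_matrix_mulVec :
    Measurable fun p : Matrix (Fin m) (Fin n) ℝ × (Fin n → ℝ) => p.1 *ᵥ p.2 := by
  refine measurable_pi_lambda _ fun i => ?_
  simp only [mulVec, dotProduct]
  exact Finset.measurable_sum _ fun j _ =>
    ((measurable_matrix_entry i j).comp measurable_fst).mul
      ((measurable_pi_apply j).comp measurable_snd)

lemma ProbabilityTheory.iIndepFun.indepFun_of_measurable_iSup {ι β γ : Type*}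
    [MeasurableSpace β] [MeasurableSpace γ] {X : ι → Ω → β} (hX : iIndepFun X μ)
    (hXm : ∀ i, Measurable (X i)) {T : Set ι} {i : ι} (hi : i ∉ T) {Y : Ω → γ}
    (hY : Measurable[⨆ j ∈ T, MeasurableSpace.comap (X j) inferInstance] Y) :
    IndepFun (X i) Y μ := by
  rw [IndepFun_iff_Indep]
  have hind := indep_iSup_of_disjoint (fun j => (hXm j).comap_le) hX.iIndep
    (Set.disjoint_singleton_left.mpr hi)
  exact indep_of_indep_of_le_right (indep_of_indep_of_le_left hind
    (le_iSup₂ (f := fun j (_ : j ∈ ({i} : Set ι)) => MeasurableSpace.comap (X j) inferInstance)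
      i rfl)) hY.comap_le

lemma ProbabilityTheory.IndepFun.integrable_mulVec {M : Ω → Matrix (Fin m) (Fin n) ℝ}
    {v : Ω → Fin n → ℝ} (hMv : IndepFun M v μ) (hM : ∀ i j, Integrable (fun s => M s i j) μ)
    (hv : Integrable v μ) : Integrable (fun s => M s *ᵥ v s) μ := by
  refine integrable_pi_iff.2 fun i => ?_
  simp only [mulVec, dotProduct]
  exact integrable_finsetSum _ fun j _ =>
    ((hMv.comp (measurable_matrix_entry i j) (measurable_pi_apply j)).integrable_mul
      (hM i j) (hv.eval j))

lemma ProbabilityTheory.IndepFun.integral_mulVec {M : Ω → Matrix (Fin m) (Fin n) ℝ}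
    {v : Ω → Fin n → ℝ} (hMv : IndepFun M v μ) (hMm : Measurable M) (hvm : Measurable v)
    (hM : ∀ i j, Integrable (fun s => M s i j) μ) (hv : Integrable v μ)
    {W : Matrix (Fin m) (Fin n) ℝ} (hW : ∀ i j, ∫ s, M s i j ∂μ = W i j) :
    ∫ s, M s *ᵥ v s ∂μ = W *ᵥ ∫ s, v s ∂μ := by
  ext i
  rw [eval_integral (hMv.integrable_mulVec hM hv).eval]
  simp only [mulVec, dotProduct]
  rw [integral_finsetSum _ fun j _ => ?_]
  · refine Finset.sum_congr rfl fun j _ => ?_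
    rw [hMv.integral_fun_comp_mul_comp hMm.aemeasurable hvm.aemeasurable
      (measurable_matrix_entry i j).aestronglyMeasurable
      (measurable_pi_apply j).aestronglyMeasurable, hW, eval_integral hv.eval]
  · exact (hMv.comp (measurable_matrix_entry i j) (measurable_pi_apply j)).integrable_mul
      (hM i j) (hv.eval j)

lemma MeasureTheory.Integrable.matrix_mulVec {f : Ω → Fin n → ℝ} (hf : Integrable f μ)
    (B : Matrix (Fin m) (Fin n) ℝ) : Integrable (fun s => B *ᵥ f s) μ :=
  (Matrix.mulVecLin B).toContinuousLinearMap.integrable_comp hf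

lemma integral_matrix_mulVec {f : Ω → Fin n → ℝ} (hf : Integrable f μ)
    (B : Matrix (Fin m) (Fin n) ℝ) : ∫ s, B *ᵥ f s ∂μ = B *ᵥ ∫ s, f s ∂μ :=
  (Matrix.mulVecLin B).toContinuousLinearMap.integral_comp_comm hf

lemma isSymm_of_ae_isSymm {H : Ω → Matrix (Fin m) (Fin m) ℝ} (hH : ∀ᵐ s ∂μ, (H s).IsSymm)
    {W : Matrix (Fin m) (Fin m) ℝ} (hW : ∀ i j, W i j = ∫ s, H s i j ∂μ) : W.IsSymm :=
  IsSymm.ext fun i j => by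
    rw [hW, hW]
    exact integral_congr_ae (hH.mono fun s hs => hs.apply i j)

end Random

section SHB

variable {Ω : Type*} {mΩ : MeasurableSpace Ω} {μ : Measure Ω} {m d : ℕ}
  (A : Matrix (Fin m) (Fin d) ℝ) (b : Fin m → ℝ) (ω β : ℝ)

def shbStep (H : Matrix (Fin m) (Fin m) ℝ) (y y' : Fin d → ℝ) : Fin d → ℝ :=
  y - ω • (Aᵀ *ᵥ (H *ᵥ (A *ᵥ y - b))) + β • (y - y')

lemma shbStep_sub {W : Matrix (Fin m) (Fin m) ℝ} {xstar : Fin d → ℝ} (hxstar : A *ᵥ xstar = b)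
    (y y' : Fin d → ℝ) :
    shbStep A b ω β W y y' - xstar
      = (y - xstar) - ω • ((Aᵀ * W * A) *ᵥ (y - xstar)) + β • ((y - xstar) - (y' - xstar)) := by
  simp only [shbStep, ← mulVec_mulVec, mulVec_sub, hxstar]
  module

lemma measurable_mulVec_sub_const (c : Fin m → ℝ) : Measurable fun y : Fin d → ℝ => A *ᵥ y - c :=
  ((continuous_const.matrix_mulVec continuous_id).sub continuous_const).measurable

variable {A b ω β}

lemma Measurable.shbStep {Hk : Ω → Matrix (Fin m) (Fin m) ℝ}
    {y y' : Ω → Fin d → ℝ} (hH : Measurable Hk) (hy : Measurable y)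
    (hy' : Measurable y') :
    Measurable fun s => shbStep A b ω β (Hk s) (y s) (y' s) := by
  have hHy : Measurable fun s => Hk s *ᵥ (A *ᵥ y s - b) :=
    measurable_matrix_mulVec.comp (hH.prodMk ((measurable_mulVec_sub_const A b).comp hy))
  unfold _root_.shbStep
  fun_prop

lemma measurable_shb_iterate {H : ℕ → Ω → Matrix (Fin m) (Fin m) ℝ} {x : ℕ → Ω → Fin d → ℝ}
    (hx : ∀ k s, x (k + 2) s = shbStep A b ω β (H (k + 1) s) (x (k + 1) s) (x k s))
    (hx0 : Measurable (x 0)) (hx1 : Measurable (x 1)) {K : ℕ}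
    (hH : ∀ j < K, Measurable (H j)) : Measurable (x K) := by
  suffices ∀ k ≤ K, Measurable (x k) from this K le_rfl
  refine Nat.twoStepInduction (fun _ => hx0) (fun _ => hx1) fun k ih₀ ih₁ hk => ?_
  rw [funext (hx k)]
  exact (hH _ (by omega)).shbStep (ih₁ (by omega)) (ih₀ (by omega))

lemma indepFun_shb_iterate {H : ℕ → Ω → Matrix (Fin m) (Fin m) ℝ} {x : ℕ → Ω → Fin d → ℝ}
    (hx : ∀ k s, x (k + 2) s = shbStep A b ω β (H (k + 1) s) (x (k + 1) s) (x k s))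
    (hH : iIndepFun H μ) (hHm : ∀ k, Measurable (H k)) {x₀ x₁ : Fin d → ℝ}
    (hx0 : ∀ s, x 0 s = x₀) (hx1 : ∀ s, x 1 s = x₁) (K : ℕ) : IndepFun (H K) (x K) μ :=
  hH.indepFun_of_measurable_iSup hHm (T := Set.Iio K) (lt_irrefl K) <|
    measurable_shb_iterate hx (funext hx0 ▸ measurable_const) (funext hx1 ▸ measurable_const)
      fun j hj => Measurable.of_comap_le (le_iSup₂ (f := fun j (_ : j ∈ Set.Iio K) =>
        MeasurableSpace.comap (H j) inferInstance) j hj)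

lemma integrable_shbStep {Hk : Ω → Matrix (Fin m) (Fin m) ℝ} {y y' : Ω → Fin d → ℝ}
    (hind : IndepFun Hk y μ) (hH : ∀ i j, Integrable (fun s => Hk s i j) μ)
    (hy : Integrable y μ) (hy' : Integrable y' μ) [IsFiniteMeasure μ] :
    Integrable (fun s => shbStep A b ω β (Hk s) (y s) (y' s)) μ := by
  have hHy : Integrable (fun s => Hk s *ᵥ (A *ᵥ y s - b)) μ :=
    (hind.comp measurable_id (measurable_mulVec_sub_const A b)).integrable_mulVec hH
      ((hy.matrix_mulVec A).sub (integrable_const b))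
  exact (hy.sub ((hHy.matrix_mulVec Aᵀ).smul ω)).add ((hy.sub hy').smul β)

lemma integral_shbStep {Hk : Ω → Matrix (Fin m) (Fin m) ℝ} {y y' : Ω → Fin d → ℝ}
    (hind : IndepFun Hk y μ) (hHm : Measurable Hk) (hym : Measurable y)
    (hH : ∀ i j, Integrable (fun s => Hk s i j) μ) {W : Matrix (Fin m) (Fin m) ℝ}
    (hW : ∀ i j, ∫ s, Hk s i j ∂μ = W i j)
    (hy : Integrable y μ) (hy' : Integrable y' μ) [IsProbabilityMeasure μ] :
    ∫ s, shbStep A b ω β (Hk s) (y s) (y' s) ∂μ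
      = shbStep A b ω β W (∫ s, y s ∂μ) (∫ s, y' s ∂μ) := by
  have hAy : Integrable (fun s => A *ᵥ y s - b) μ := (hy.matrix_mulVec A).sub (integrable_const b)
  have hind' : IndepFun Hk (fun s => A *ᵥ y s - b) μ :=
    hind.comp measurable_id (measurable_mulVec_sub_const A b)
  have hHy : Integrable (fun s => Hk s *ᵥ (A *ᵥ y s - b)) μ := hind'.integrable_mulVec hH hAy
  have hgrad : Integrable (fun s => ω • (Aᵀ *ᵥ (Hk s *ᵥ (A *ᵥ y s - b)))) μ :=
    (hHy.matrix_mulVec Aᵀ).smul ω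
  have hstep : Integrable (fun s => y s - ω • (Aᵀ *ᵥ (Hk s *ᵥ (A *ᵥ y s - b)))) μ :=
    hy.sub hgrad
  have hmom : Integrable (fun s => β • (y s - y' s)) μ := (hy.sub hy').smul β
  simp only [shbStep]
  rw [integral_add hstep hmom, integral_sub hy hgrad, integral_smul, integral_smul,
    integral_sub hy hy', integral_matrix_mulVec hHy,
    hind'.integral_mulVec hHm ((measurable_mulVec_sub_const A b).comp hym) hH hAy hW,
    integral_sub (hy.matrix_mulVec A) (integrable_const b), integral_matrix_mulVec hy,
    integral_const, probReal_univ, one_smul]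

lemma integrable_shb_iterate {H : ℕ → Ω → Matrix (Fin m) (Fin m) ℝ} {x : ℕ → Ω → Fin d → ℝ}
    (hx : ∀ k s, x (k + 2) s = shbStep A b ω β (H (k + 1) s) (x (k + 1) s) (x k s))
    (hH : iIndepFun H μ) (hHm : ∀ k, Measurable (H k))
    (hHint : ∀ k i j, Integrable (fun s => H k s i j) μ) {x₀ x₁ : Fin d → ℝ}
    (hx0 : ∀ s, x 0 s = x₀) (hx1 : ∀ s, x 1 s = x₁) [IsFiniteMeasure μ] (k : ℕ) :
    Integrable (x k) μ := by
  induction k using Nat.twoStepInduction with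
  | zero => exact funext hx0 ▸ integrable_const x₀
  | one => exact funext hx1 ▸ integrable_const x₁
  | more k ih₀ ih₁ =>
    rw [funext (hx k)]
    exact integrable_shbStep (indepFun_shb_iterate hx hH hHm hx0 hx1 _) (hHint _) ih₁ ih₀

lemma integral_shb_iterate_sub {H : ℕ → Ω → Matrix (Fin m) (Fin m) ℝ} {x : ℕ → Ω → Fin d → ℝ}
    (hx : ∀ k s, x (k + 2) s = shbStep A b ω β (H (k + 1) s) (x (k + 1) s) (x k s))
    (hH : iIndepFun H μ) (hHm : ∀ k, Measurable (H k))
    (hHint : ∀ k i j, Integrable (fun s => H k s i j) μ) {W : Matrix (Fin m) (Fin m) ℝ}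
    (hW : ∀ k i j, ∫ s, H k s i j ∂μ = W i j) {x₀ x₁ xstar : Fin d → ℝ}
    (hx0 : ∀ s, x 0 s = x₀) (hx1 : ∀ s, x 1 s = x₁) (hxstar : A *ᵥ xstar = b)
    [IsProbabilityMeasure μ] (k : ℕ) :
    ∫ s, x (k + 2) s ∂μ - xstar
      = (∫ s, x (k + 1) s ∂μ - xstar) - ω • ((Aᵀ * W * A) *ᵥ (∫ s, x (k + 1) s ∂μ - xstar))
        + β • ((∫ s, x (k + 1) s ∂μ - xstar) - (∫ s, x k s ∂μ - xstar)) := by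
  have hxm : Measurable (x (k + 1)) :=
    measurable_shb_iterate hx (funext hx0 ▸ measurable_const) (funext hx1 ▸ measurable_const)
      fun j _ => hHm j
  rw [funext (hx k), integral_shbStep (indepFun_shb_iterate hx hH hHm hx0 hx1 _) (hHm _) hxm
    (hHint _) (hW _) (integrable_shb_iterate hx hH hHm hHint hx0 hx1 _)
    (integrable_shb_iterate hx hH hHm hHint hx0 hx1 _), shbStep_sub A b ω β hxstar]

end SHB

theorem shb_L1_accelerated_linear_convergence_general {m d : ℕ}
    {Ω : Type*} [MeasurableSpace Ω] (μ : Measure Ω) [IsProbabilityMeasure μ]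
    (A : Matrix (Fin m) (Fin d) ℝ) (b : Fin m → ℝ)
    -- the i.i.d. random matrices `H_k`, a.s. symmetric psd with `H A Aᵀ H = H`
    (H : ℕ → Ω → Matrix (Fin m) (Fin m) ℝ)
    (hHmeas : ∀ k, Measurable (H k))
    (hHiid : iIndepFun H μ)
    (hHident : ∀ k, μ.map (H k) = μ.map (H 0))
    (hHas : ∀ k, ∀ᵐ s ∂μ, (H k s).PosSemidef ∧ H k s * (A * Aᵀ) * H k s = H k s)
    (hHint : ∀ k i j, Integrable (fun s => H k s i j) μ)
    -- `W = E[H_0]`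
    (W : Matrix (Fin m) (Fin m) ℝ)
    (hW : ∀ i j, W i j = ∫ s, H 0 s i j ∂μ)
    -- `λmin⁺` and `λmax`: smallest nonzero / largest eigenvalue of `Aᵀ W A`
    (lmin lmax : ℝ)
    (hlmin : ∀ v : Fin d → ℝ, (∃ u, v = Aᵀ *ᵥ u) →
      lmin * (v ⬝ᵥ v) ≤ v ⬝ᵥ ((Aᵀ * W * A) *ᵥ v))
    (hlmax : ∀ v : Fin d → ℝ, v ⬝ᵥ ((Aᵀ * W * A) *ᵥ v) ≤ lmax * (v ⬝ᵥ v))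
    -- parameters
    (ω β : ℝ) (hω0 : 0 < ω) (hω : ω ≤ 1 / lmax)
    (hβlow : (1 - Real.sqrt (ω * lmin)) ^ 2 < β) (hβhigh : β < 1)
    -- the SHB iterates, started from deterministic `x0, x1` with `x0 − x1 ∈ Range Aᵀ`
    (x0 x1 : Fin d → ℝ) (hx01 : ∃ u, x0 - x1 = Aᵀ *ᵥ u)
    (x : ℕ → Ω → (Fin d → ℝ))
    (hx0 : ∀ s, x 0 s = x0) (hx1 : ∀ s, x 1 s = x1)
    (hrec : ∀ k, 1 ≤ k → ∀ s,
      x (k + 1) s = x k s - ω • (Aᵀ *ᵥ (H k s *ᵥ (A *ᵥ x k s - b)))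
        + β • (x k s - x (k - 1) s))
    -- `x*` is the orthogonal projection of `x0` onto `{x : A x = b}`
    (xstar : Fin d → ℝ) (hxstar : A *ᵥ xstar = b)
    (hproj : ∀ y : Fin d → ℝ, A *ᵥ y = b →
      (x0 - xstar) ⬝ᵥ (x0 - xstar) ≤ (x0 - y) ⬝ᵥ (x0 - y)) :
    ∃ C : ℝ, 0 < C ∧ ∀ k : ℕ,
      (fun i => ∫ s, (x k s i - xstar i) ∂μ) ⬝ᵥ (fun i => ∫ s, (x k s i - xstar i) ∂μ)
        ≤ β ^ k * C := by
  have hstep : ∀ k s, x (k + 2) s = shbStep A b ω β (H (k + 1) s) (x (k + 1) s) (x k s) :=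
    fun k => hrec (k + 1) (Nat.le_add_left 1 k)
  have hEH : ∀ k i j, ∫ s, H k s i j ∂μ = W i j := fun k i j =>
    ((IdentDistrib.mk (hHmeas k).aemeasurable (hHmeas 0).aemeasurable (hHident k)).comp
      (measurable_matrix_entry i j)).integral_eq.trans (hW i j).symm
  have hint := integrable_shb_iterate hstep hHiid hHmeas hHint hx0 hx1
  set r : ℕ → Fin d → ℝ := fun k => ∫ s, x k s ∂μ - xstar
  have hr0 : r 0 = x0 - xstar := by simp [r, funext hx0]
  have hr1 : r 1 = (x0 - xstar) - (x0 - x1) := by simp [r, funext hx1]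
  have hx0R := A.sub_mem_range_transpose_of_forall_le hxstar hproj
  obtain ⟨u, hu⟩ := hx01
  have hT : (Aᵀ * W * A).IsSymm := (isSymm_of_ae_isSymm ((hHas 0).mono fun s hs =>
    isHermitian_iff_isSymm.mp hs.1.isHermitian) hW).transpose_mul_mul A
  have hωlmax : ω * lmax ≤ 1 := (le_div_iff₀ (one_div_pos.mp (hω0.trans_le hω))).mp hω
  obtain ⟨C, hC, hCk⟩ := heavyBall_exists_dotProduct_self_le_pow_mul hT
    (fun v _ => A.transpose_mul_mul_mulVec_mem_range W v)
    (fun v ⟨w, hw⟩ => hlmin v ⟨w, hw.symm⟩) (fun v _ => hlmax v) hω0.le hωlmax hβlow hβhigh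
    (hr0 ▸ hx0R) (hr1 ▸ Submodule.sub_mem _ hx0R ⟨u, hu.symm⟩)
    (integral_shb_iterate_sub hstep hHiid hHmeas hHint hEH hx0 hx1 hxstar)
  refine ⟨C, hC, fun k => ?_⟩
  have hrk : (fun i => ∫ s, (x k s i - xstar i) ∂μ) = r k := by
    ext i
    rw [integral_sub ((hint k).eval i) (integrable_const _), ← eval_integral (hint k).eval]
    simp [r]
  exact hrk ▸ hCk k

/-- L1 (expected-iterates) accelerated linear convergence of SHB.
Assume exactness, and let the SHB iterates be started from `x0, x1 ∈ ℝ^d` with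
`x0 − x1 ∈ Range Aᵀ`, with stepsize `0 < ω ≤ 1/λmax` and momentum parameter `β`
satisfying `(1 − sqrt(ω λmin⁺))² < β < 1`.  Let `x*` be the orthogonal projection of
`x0` onto `{x : A x = b}`.  Then there exists a constant `C > 0` such that for all
`k ≥ 0`, `‖E[x_k − x*]‖² ≤ β^k C`. -/
theorem shb_L1_accelerated_linear_convergence {m d : ℕ}
    {Ω : Type*} [MeasurableSpace Ω] (μ : Measure Ω) [IsProbabilityMeasure μ]
    (A : Matrix (Fin m) (Fin d) ℝ) (b : Fin m → ℝ)
    -- the i.i.d. random matrices `H_k`, a.s. symmetric psd with `H A Aᵀ H = H`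
    (H : ℕ → Ω → Matrix (Fin m) (Fin m) ℝ)
    (hHmeas : ∀ k, Measurable (H k))
    (hHiid : iIndepFun H μ)
    (hHident : ∀ k, μ.map (H k) = μ.map (H 0))
    (hHas : ∀ k, ∀ᵐ s ∂μ, (H k s).PosSemidef ∧ H k s * (A * Aᵀ) * H k s = H k s)
    (hHint : ∀ k i j, Integrable (fun s => H k s i j) μ)
    -- `W = E[H_0]`
    (W : Matrix (Fin m) (Fin m) ℝ)
    (hW : ∀ i j, W i j = ∫ s, H 0 s i j ∂μ)
    -- the objective `f` and exactness
    (f : (Fin d → ℝ) → ℝ)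
    (hf : ∀ y, f y = (1 / 2) * ((A *ᵥ y - b) ⬝ᵥ (W *ᵥ (A *ᵥ y - b))))
    (hexact : {y : Fin d → ℝ | f y = 0} = {y : Fin d → ℝ | A *ᵥ y = b})
    -- `λmin⁺` and `λmax`: smallest nonzero / largest eigenvalue of `Aᵀ W A`
    (lmin lmax : ℝ) (hlmin_pos : 0 < lmin) (hlmax_pos : 0 < lmax)
    (hlmin : ∀ v : Fin d → ℝ, (∃ u, v = Aᵀ *ᵥ u) →
      lmin * (v ⬝ᵥ v) ≤ v ⬝ᵥ ((Aᵀ * W * A) *ᵥ v))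
    (hlmax : ∀ v : Fin d → ℝ, v ⬝ᵥ ((Aᵀ * W * A) *ᵥ v) ≤ lmax * (v ⬝ᵥ v))
    -- parameters
    (ω β : ℝ) (hω0 : 0 < ω) (hω : ω ≤ 1 / lmax)
    (hβlow : (1 - Real.sqrt (ω * lmin)) ^ 2 < β) (hβhigh : β < 1)
    -- the SHB iterates, started from deterministic `x0, x1` with `x0 − x1 ∈ Range Aᵀ`
    (x0 x1 : Fin d → ℝ) (hx01 : ∃ u, x0 - x1 = Aᵀ *ᵥ u)
    (x : ℕ → Ω → (Fin d → ℝ))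
    (hx0 : ∀ s, x 0 s = x0) (hx1 : ∀ s, x 1 s = x1)
    (hrec : ∀ k, 1 ≤ k → ∀ s,
      x (k + 1) s = x k s - ω • (Aᵀ *ᵥ (H k s *ᵥ (A *ᵥ x k s - b)))
        + β • (x k s - x (k - 1) s))
    -- `x*` is the orthogonal projection of `x0` onto `{x : A x = b}`
    (xstar : Fin d → ℝ) (hxstar : A *ᵥ xstar = b)
    (hproj : ∀ y : Fin d → ℝ, A *ᵥ y = b →
      (x0 - xstar) ⬝ᵥ (x0 - xstar) ≤ (x0 - y) ⬝ᵥ (x0 - y)) :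
    ∃ C : ℝ, 0 < C ∧ ∀ k : ℕ,
      (fun i => ∫ s, (x k s i - xstar i) ∂μ) ⬝ᵥ (fun i => ∫ s, (x k s i - xstar i) ∂μ)
        ≤ β ^ k * C :=
  shb_L1_accelerated_linear_convergence_general μ A b H hHmeas hHiid hHident hHas hHint W hW lmin
    lmax hlmin hlmax ω β hω0 hω hβlow hβhigh x0 x1 hx01 x hx0 hx1 hrec xstar hxstar hproj
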